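/- For a connected graph, if (C,C̄) is a consistent partition with λ = NCut(C,C̄) and γ ≥ gvol(V)·λ/4, then the set of minimizers of NCut over consistent partitions equals the set of minimizers of F̂_γ over all subsets of V, and the two optimal values are equal. -/

import Mathlib

open Finset

/-- cut(C, C̄) = 2 ∑_{i∈C, j∈C̄} w_{ij} -/
noncomputable def cutW {n : ℕ} (w : Fin n → Fin n → ℝ) (C : Finset (Fin n)) : ℝ :=
  2 * ∑ i ∈ C, ∑ j ∈ Cᶜ, w i j

/-- generalized volume gvol(C) = ∑_{i∈C} b_i -/
noncomputable def gvol {n : ℕ} (b : Fin n → ℝ) (C : Finset (Fin n)) : ℝ := ∑ i ∈ C, b i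

/-- bal(C) = 2 gvol(C) gvol(C̄) / gvol(V) -/
noncomputable def bal {n : ℕ} (b : Fin n → ℝ) (C : Finset (Fin n)) : ℝ :=
  2 * gvol b C * gvol b Cᶜ / gvol b Finset.univ

/-- NCut(C,C̄) = cut(C,C̄)/bal(C) -/
noncomputable def ncut {n : ℕ} (w : Fin n → Fin n → ℝ) (b : Fin n → ℝ) (C : Finset (Fin n)) : ℝ :=
  cutW w C / bal b C

/-- M̂(C) = 2 ∑_{i∈C, j∈C̄} q^m_{ij}, twice the number of violated must-links -/
noncomputable def Mhat {n : ℕ} (qm : Fin n → Fin n → ℝ) (C : Finset (Fin n)) : ℝ :=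
  2 * ∑ i ∈ C, ∑ j ∈ Cᶜ, qm i j

/-- N̂(C) = ∑_{i,j∈C} q^c_{ij} + ∑_{i,j∈C̄} q^c_{ij}, twice the number of violated cannot-links -/
noncomputable def Nhat {n : ℕ} (qc : Fin n → Fin n → ℝ) (C : Finset (Fin n)) : ℝ :=
  (∑ i ∈ C, ∑ j ∈ C, qc i j) + ∑ i ∈ Cᶜ, ∑ j ∈ Cᶜ, qc i j

/-- F̂_γ(C) = (cut(C,C̄) + γ(M̂(C)+N̂(C))) / bal(C) -/
noncomputable def Fhat {n : ℕ} (w : Fin n → Fin n → ℝ) (b : Fin n → ℝ)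
    (qm qc : Fin n → Fin n → ℝ) (γ : ℝ) (C : Finset (Fin n)) : ℝ :=
  (cutW w C + γ * (Mhat qm C + Nhat qc C)) / bal b C

/-!
On a consistent partition `F̂_γ` is `NCut`. On an inconsistent one `M̂ + N̂ ≥ 2`: a violated
must-link is counted twice by definition, and a violated cannot-link `{i, j}` is counted as both
`(i, j)` and `(j, i)`, where `i ≠ j` because the consistency of `C` forces the diagonal of `q^c` to
vanish. Since moreover `bal ≤ gvol(V) / 2` and `cut > 0`, an inconsistent set has
`F̂_γ > 2γ / bal ≥ 4γ / gvol(V) ≥ λ = F̂_γ(C)`, so it never competes with `C`, and minimizing `F̂_γ`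
over all nontrivial sets is the same as minimizing `NCut` over the consistent ones.
-/

section ExactPenalty

variable {α : Type*} {P Q : α → Prop} {f g : α → ℝ} {c : α}

theorem setOf_minimizers_eq_of_penalty (hfg : ∀ a, P a → Q a → g a = f a) (hPc : P c)
    (hQc : Q c) (hgt : ∀ a, P a → ¬ Q a → f c < g a) :
    {a | P a ∧ Q a ∧ ∀ b, P b → Q b → f a ≤ f b} = {a | P a ∧ ∀ b, P b → g a ≤ g b} := by
  ext a
  constructor
  · rintro ⟨hPa, hQa, hmin⟩
    refine ⟨hPa, fun b hPb => ?_⟩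
    rw [hfg a hPa hQa]
    by_cases hQb : Q b
    · exact (hmin b hPb hQb).trans (hfg b hPb hQb).ge
    · exact (hmin c hPc hQc).trans (hgt b hPb hQb).le
  · rintro ⟨hPa, hmin⟩
    have hQa : Q a := by
      by_contra hQa
      exact (hgt a hPa hQa).not_ge ((hmin c hPc).trans (hfg c hPc hQc).le)
    refine ⟨hPa, hQa, fun b hPb hQb => ?_⟩
    simpa only [hfg a hPa hQa, hfg b hPb hQb] using hmin b hPb

theorem sInf_eq_of_penalty [Finite α] (hfg : ∀ a, P a → Q a → g a = f a) (hPc : P c)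
    (hQc : Q c) (hgt : ∀ a, P a → ¬ Q a → f c < g a) :
    sInf {x | ∃ a, P a ∧ Q a ∧ x = f a} = sInf {x | ∃ a, P a ∧ x = g a} := by
  obtain ⟨m, ⟨hPm, hQm⟩, hmin⟩ :=
    Set.exists_min_image {a | P a ∧ Q a} f (Set.toFinite _) ⟨c, hPc, hQc⟩
  have hm : m ∈ {a | P a ∧ Q a ∧ ∀ b, P b → Q b → f a ≤ f b} :=
    ⟨hPm, hQm, fun b hPb hQb => hmin b ⟨hPb, hQb⟩⟩
  rw [setOf_minimizers_eq_of_penalty hfg hPc hQc hgt] at hm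
  have hleast_f : IsLeast {x | ∃ a, P a ∧ Q a ∧ x = f a} (f m) := by
    refine ⟨⟨m, hPm, hQm, rfl⟩, ?_⟩
    rintro _ ⟨b, hPb, hQb, rfl⟩
    exact hmin b ⟨hPb, hQb⟩
  have hleast_g : IsLeast {x | ∃ a, P a ∧ x = g a} (f m) := by
    refine ⟨⟨m, hPm, (hfg m hPm hQm).symm⟩, ?_⟩
    rintro _ ⟨b, hPb, rfl⟩
    exact (hfg m hPm hQm).ge.trans (hm.2 b hPb)
  rw [hleast_f.csInf_eq, hleast_g.csInf_eq]

end ExactPenalty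

theorem nonneg_of_eq_zero_or_eq_one {x : ℝ} (h : x = 0 ∨ x = 1) : 0 ≤ x :=
  h.elim (fun h => h.ge) (fun h => h ▸ zero_le_one)

theorem one_le_sum_of_ne_zero {ι : Type*} {s : Finset ι} {f : ι → ℝ}
    (hf : ∀ i ∈ s, f i = 0 ∨ f i = 1) (h : ∑ i ∈ s, f i ≠ 0) : 1 ≤ ∑ i ∈ s, f i := by
  obtain ⟨i, hi, hfi⟩ := exists_ne_zero_of_sum_ne_zero h
  calc 1 = f i := ((hf i hi).resolve_left hfi).symm
    _ ≤ ∑ i ∈ s, f i :=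
      single_le_sum (fun j hj => nonneg_of_eq_zero_or_eq_one (hf j hj)) hi

section Constraints

variable {n : ℕ} {q : Fin n → Fin n → ℝ}

theorem sum_sum_self_nonneg (hq : ∀ i j, 0 ≤ q i j) (E : Finset (Fin n)) :
    0 ≤ ∑ i ∈ E, ∑ j ∈ E, q i j :=
  sum_nonneg fun i _ => sum_nonneg fun j _ => hq i j

theorem Nhat_nonneg (hq : ∀ i j, 0 ≤ q i j) (D : Finset (Fin n)) : 0 ≤ Nhat q D :=
  add_nonneg (sum_sum_self_nonneg hq D) (sum_sum_self_nonneg hq Dᶜ)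

theorem two_le_Mhat_of_ne_zero (hq : ∀ i j, q i j = 0 ∨ q i j = 1) {D : Finset (Fin n)}
    (h : Mhat q D ≠ 0) : 2 ≤ Mhat q D := by
  rw [Mhat, ← sum_product'] at h ⊢
  have := one_le_sum_of_ne_zero (fun p _ => hq p.1 p.2) (right_ne_zero_of_mul h)
  linarith

theorem two_le_sum_sum_self_of_ne_zero (hq : ∀ i j, q i j = 0 ∨ q i j = 1)
    (hsymm : ∀ i j, q i j = q j i) (hdiag : ∀ i, q i i = 0) {E : Finset (Fin n)}
    (h : ∑ i ∈ E, ∑ j ∈ E, q i j ≠ 0) : 2 ≤ ∑ i ∈ E, ∑ j ∈ E, q i j := by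
  rw [← sum_product'] at h ⊢
  obtain ⟨⟨i, j⟩, hij, hq_ne⟩ := exists_ne_zero_of_sum_ne_zero h
  rw [mem_product] at hij
  have hq_one : q i j = 1 := (hq i j).resolve_left hq_ne
  have hne : (i, j) ≠ (j, i) := fun h => hq_ne (by rw [Prod.ext_iff.1 h |>.1, hdiag])
  have := add_le_sum (f := fun p : Fin n × Fin n => q p.1 p.2)
    (fun p _ => nonneg_of_eq_zero_or_eq_one (hq p.1 p.2))
    (mem_product.2 hij) (mem_product.2 hij.symm) hne
  simp only [← hsymm i j, hq_one] at this
  linarith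

theorem two_le_Nhat_of_ne_zero (hq : ∀ i j, q i j = 0 ∨ q i j = 1)
    (hsymm : ∀ i j, q i j = q j i) (hdiag : ∀ i, q i i = 0) {D : Finset (Fin n)}
    (h : Nhat q D ≠ 0) : 2 ≤ Nhat q D := by
  have hq_nonneg i j : 0 ≤ q i j := nonneg_of_eq_zero_or_eq_one (hq i j)
  have hDc := sum_sum_self_nonneg hq_nonneg Dᶜ
  unfold Nhat at h ⊢
  by_cases hzero : ∑ i ∈ D, ∑ j ∈ D, q i j = 0
  · rw [hzero, zero_add] at h ⊢
    exact two_le_sum_sum_self_of_ne_zero hq hsymm hdiag h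
  · linarith [two_le_sum_sum_self_of_ne_zero hq hsymm hdiag hzero]

theorem diag_eq_zero_of_Nhat_eq_zero (hq : ∀ i j, 0 ≤ q i j) {C : Finset (Fin n)}
    (h : Nhat q C = 0) (i : Fin n) : q i i = 0 := by
  have hblock {E : Finset (Fin n)} (hE : ∑ i ∈ E, ∑ j ∈ E, q i j = 0) (hi : i ∈ E) :
      q i i = 0 := by
    rw [← sum_product', sum_eq_zero_iff_of_nonneg fun p _ => hq p.1 p.2] at hE
    exact hE (i, i) (mem_product.2 ⟨hi, hi⟩)
  obtain ⟨hC, hCc⟩ :=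
    (add_eq_zero_iff_of_nonneg (sum_sum_self_nonneg hq C) (sum_sum_self_nonneg hq Cᶜ)).1 h
  by_cases hi : i ∈ C
  · exact hblock hC hi
  · exact hblock hCc (mem_compl.2 hi)

theorem two_le_Mhat_add_Nhat {qm qc : Fin n → Fin n → ℝ}
    (hqm : ∀ i j, qm i j = 0 ∨ qm i j = 1) (hqc : ∀ i j, qc i j = 0 ∨ qc i j = 1)
    (hqc_symm : ∀ i j, qc i j = qc j i) (hqc_diag : ∀ i, qc i i = 0) {D : Finset (Fin n)}
    (h : ¬ (Mhat qm D = 0 ∧ Nhat qc D = 0)) : 2 ≤ Mhat qm D + Nhat qc D := by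
  by_cases hM : Mhat qm D = 0
  · rw [hM, zero_add]
    exact two_le_Nhat_of_ne_zero hqc hqc_symm hqc_diag fun hN => h ⟨hM, hN⟩
  · linarith [two_le_Mhat_of_ne_zero hqm hM,
      Nhat_nonneg (fun i j => nonneg_of_eq_zero_or_eq_one (hqc i j)) D]

end Constraints

section Balance

variable {n : ℕ} {b : Fin n → ℝ}

theorem gvol_pos (hb : ∀ i, 0 < b i) {D : Finset (Fin n)} (hD : D.Nonempty) : 0 < gvol b D :=
  sum_pos (fun i _ => hb i) hD

theorem bal_pos (hb : ∀ i, 0 < b i) {D : Finset (Fin n)} (hD₁ : D ≠ ∅) (hD₂ : D ≠ univ) :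
    0 < bal b D := by
  have hD := nonempty_iff_ne_empty.2 hD₁
  have := gvol_pos hb hD
  have := gvol_pos hb (nonempty_iff_ne_empty.2 (by rwa [Ne, compl_eq_empty_iff]))
  have := gvol_pos hb (hD.mono (subset_univ D))
  unfold bal
  positivity

theorem bal_le_half_gvol_univ (hV : 0 ≤ gvol b univ) (D : Finset (Fin n)) :
    bal b D ≤ gvol b univ / 2 := by
  have hsum : gvol b D + gvol b Dᶜ = gvol b univ := sum_add_sum_compl D b
  refine div_le_of_le_mul₀ hV (by positivity) ?_
  nlinarith [sq_nonneg (gvol b D - gvol b Dᶜ)]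

end Balance

theorem Fhat_eq_ncut {n : ℕ} (w : Fin n → Fin n → ℝ) (b : Fin n → ℝ) {qm qc : Fin n → Fin n → ℝ}
    (γ : ℝ) {D : Finset (Fin n)} (hM : Mhat qm D = 0) (hN : Nhat qc D = 0) :
    Fhat w b qm qc γ D = ncut w b D := by
  rw [Fhat, ncut, hM, hN, add_zero, mul_zero, add_zero]

theorem lt_Fhat_of_two_le {n : ℕ} {w : Fin n → Fin n → ℝ} {b : Fin n → ℝ}
    {qm qc : Fin n → Fin n → ℝ} (hb : ∀ i, 0 < b i) {D : Finset (Fin n)} (hD₁ : D ≠ ∅)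
    (hD₂ : D ≠ univ) (hcut : 0 < cutW w D) (hMN : 2 ≤ Mhat qm D + Nhat qc D) {l γ : ℝ}
    (hl : 0 ≤ l) (hγ : gvol b univ * l / 4 ≤ γ) : l < Fhat w b qm qc γ D := by
  have hV : 0 < gvol b univ := gvol_pos hb (nonempty_iff_ne_empty.2 hD₁ |>.mono (subset_univ D))
  have hγ_nonneg : 0 ≤ γ := le_trans (by positivity) hγ
  rw [Fhat, lt_div_iff₀ (bal_pos hb hD₁ hD₂)]
  calc l * bal b D ≤ l * (gvol b univ / 2) :=
        mul_le_mul_of_nonneg_left (bal_le_half_gvol_univ hV.le D) hl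
    _ ≤ γ * 2 := by linarith
    _ ≤ γ * (Mhat qm D + Nhat qc D) := mul_le_mul_of_nonneg_left hMN hγ_nonneg
    _ < cutW w D + γ * (Mhat qm D + Nhat qc D) := by linarith

theorem stmt_1_general {n : ℕ} (w : Fin n → Fin n → ℝ) (b : Fin n → ℝ)
    (qm qc : Fin n → Fin n → ℝ)
    (hb : ∀ i, 0 < b i)
    (hqm01 : ∀ i j, qm i j = 0 ∨ qm i j = 1)
    (hqc01 : ∀ i j, qc i j = 0 ∨ qc i j = 1) (hqc_symm : ∀ i j, qc i j = qc j i)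
    (hconn : ∀ C : Finset (Fin n), C ≠ ∅ → C ≠ Finset.univ → 0 < cutW w C)
    (C : Finset (Fin n)) (hC₁ : C ≠ ∅) (hC₂ : C ≠ Finset.univ)
    (hcons : Mhat qm C = 0 ∧ Nhat qc C = 0)
    (γ : ℝ)
    (hγ : gvol b Finset.univ * ncut w b C / 4 ≤ γ) :
    ({D : Finset (Fin n) | D ≠ ∅ ∧ D ≠ Finset.univ ∧ Mhat qm D = 0 ∧ Nhat qc D = 0 ∧
        ∀ D' : Finset (Fin n), D' ≠ ∅ → D' ≠ Finset.univ →
          Mhat qm D' = 0 → Nhat qc D' = 0 → ncut w b D ≤ ncut w b D'}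
      = {D : Finset (Fin n) | D ≠ ∅ ∧ D ≠ Finset.univ ∧
        ∀ D' : Finset (Fin n), D' ≠ ∅ → D' ≠ Finset.univ →
          Fhat w b qm qc γ D ≤ Fhat w b qm qc γ D'})
    ∧ sInf {x : ℝ | ∃ D : Finset (Fin n), D ≠ ∅ ∧ D ≠ Finset.univ ∧
          Mhat qm D = 0 ∧ Nhat qc D = 0 ∧ x = ncut w b D}
      = sInf {x : ℝ | ∃ D : Finset (Fin n), D ≠ ∅ ∧ D ≠ Finset.univ ∧
          x = Fhat w b qm qc γ D} := by
  have hqc_diag := diag_eq_zero_of_Nhat_eq_zero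
    (fun i j => nonneg_of_eq_zero_or_eq_one (hqc01 i j)) hcons.2
  have hncut_nonneg : 0 ≤ ncut w b C := (div_pos (hconn C hC₁ hC₂) (bal_pos hb hC₁ hC₂)).le
  have hgt (D : Finset (Fin n)) (hD : D ≠ ∅ ∧ D ≠ univ)
      (hinc : ¬ (Mhat qm D = 0 ∧ Nhat qc D = 0)) : ncut w b C < Fhat w b qm qc γ D :=
    lt_Fhat_of_two_le hb hD.1 hD.2 (hconn D hD.1 hD.2)
      (two_le_Mhat_add_Nhat hqm01 hqc01 hqc_symm hqc_diag hinc) hncut_nonneg hγ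
  have hfg (D : Finset (Fin n)) (_ : D ≠ ∅ ∧ D ≠ univ)
      (hD : Mhat qm D = 0 ∧ Nhat qc D = 0) : Fhat w b qm qc γ D = ncut w b D :=
    Fhat_eq_ncut w b γ hD.1 hD.2
  have hmin := setOf_minimizers_eq_of_penalty hfg ⟨hC₁, hC₂⟩ hcons hgt
  have hinf := sInf_eq_of_penalty hfg ⟨hC₁, hC₂⟩ hcons hgt
  simp only [and_assoc, and_imp] at hmin hinf
  exact ⟨hmin, hinf⟩

/-- Theorem 2: for γ ≥ gvol(V)·λ/4, the minimizers of NCut over consistent nontrivial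
partitions coincide with the minimizers of F̂_γ over nontrivial subsets, and the optimal
values agree. -/
theorem stmt_1 {n : ℕ} (w : Fin n → Fin n → ℝ) (b : Fin n → ℝ)
    (qm qc : Fin n → Fin n → ℝ)
    (hw_symm : ∀ i j, w i j = w j i) (hw_nonneg : ∀ i j, 0 ≤ w i j)
    (hb : ∀ i, 0 < b i)
    (hqm01 : ∀ i j, qm i j = 0 ∨ qm i j = 1) (hqm_symm : ∀ i j, qm i j = qm j i)
    (hqc01 : ∀ i j, qc i j = 0 ∨ qc i j = 1) (hqc_symm : ∀ i j, qc i j = qc j i)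
    (hconn : ∀ C : Finset (Fin n), C ≠ ∅ → C ≠ Finset.univ → 0 < cutW w C)
    (C : Finset (Fin n)) (hC₁ : C ≠ ∅) (hC₂ : C ≠ Finset.univ)
    (hcons : Mhat qm C = 0 ∧ Nhat qc C = 0)
    (γ : ℝ)
    (hγ : gvol b Finset.univ * ncut w b C / 4 ≤ γ) :
    ({D : Finset (Fin n) | D ≠ ∅ ∧ D ≠ Finset.univ ∧ Mhat qm D = 0 ∧ Nhat qc D = 0 ∧
        ∀ D' : Finset (Fin n), D' ≠ ∅ → D' ≠ Finset.univ →
          Mhat qm D' = 0 → Nhat qc D' = 0 → ncut w b D ≤ ncut w b D'}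
      = {D : Finset (Fin n) | D ≠ ∅ ∧ D ≠ Finset.univ ∧
        ∀ D' : Finset (Fin n), D' ≠ ∅ → D' ≠ Finset.univ →
          Fhat w b qm qc γ D ≤ Fhat w b qm qc γ D'})
    ∧ sInf {x : ℝ | ∃ D : Finset (Fin n), D ≠ ∅ ∧ D ≠ Finset.univ ∧
          Mhat qm D = 0 ∧ Nhat qc D = 0 ∧ x = ncut w b D}
      = sInf {x : ℝ | ∃ D : Finset (Fin n), D ≠ ∅ ∧ D ≠ Finset.univ ∧
          x = Fhat w b qm qc γ D} :=
  stmt_1_general w b qm qc hb hqm01 hqc01 hqc_symm hconn C hC₁ hC₂ hcons γ hγ
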